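/- arXiv:1112.3798 — 2 statements merged into one kernel-verified Lean document; each statement's English description precedes it below -/
import Mathlib

section
/- Under the compatibility condition of the previous context and assuming the concentrations evolve via the Kolmogorov forward equations of an irreducible Markov chain with stationary concentrations c_{j,e}, the Gibbs free energy density g(t) = Σ_j c_j(t)·μ_j(t) is non-increasing in time, and g(t) ≥ μ·c with equality if and only if c_j = c_{j,e} for all j. -/
/-!
The compatibility condition turns the free energy into `g = μ c + β⁻¹ D(c ‖ c_e)` with `D` the
relative entropy, so the lower bound and its equality case are Gibbs' inequality. Along the forward
equations, which conserve mass, with `x = c / c_e` we get `dD/dt = Σ_{j,k} u_{kj} c_k (log x_j - log x_k)`,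
and `x_k (log x_j - log x_k) ≤ x_j - x_k` bounds this by `Σ_{j,k} u_{kj} c_{k,e} (x_j - x_k)`,
which vanishes by stationarity of `c_e`.
-/

open Real Finset InformationTheory

namespace MasterEquation

variable {ι : Type*} [Fintype ι]

/-- Rate of change of `c j` under the Kolmogorov forward equations with rates `u`. -/
noncomputable def netInflow (u : ι → ι → ℝ) (c : ι → ℝ) (j : ι) : ℝ :=
  ∑ k, (u k j * c k - u j k * c j)

noncomputable def relEntropy (x y : ι → ℝ) : ℝ :=
  ∑ j, x j * (log (x j) - log (y j))

lemma sum_netInflow_mul (u : ι → ι → ℝ) (c L : ι → ℝ) :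
    ∑ j, netInflow u c j * L j = ∑ j, ∑ k, u k j * c k * (L j - L k) := by
  have hswap : ∑ j, ∑ k, u j k * c j * L j = ∑ j, ∑ k, u k j * c k * L k := sum_comm
  simp only [netInflow, sum_mul, sub_mul, mul_sub, sum_sub_distrib, hswap]

lemma sum_netInflow (u : ι → ι → ℝ) (c : ι → ℝ) : ∑ j, netInflow u c j = 0 := by
  simpa using sum_netInflow_mul u c 1

lemma mul_log_sub_log_le_sub {a b : ℝ} (ha : 0 < a) (hb : 0 < b) :
    a * (log b - log a) ≤ b - a := by
  have h := log_le_sub_one_of_pos (div_pos hb ha)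
  rw [log_div hb.ne' ha.ne'] at h
  calc a * (log b - log a) ≤ a * (b / a - 1) := mul_le_mul_of_nonneg_left h ha.le
    _ = b - a := by field_simp

lemma sum_netInflow_mul_log_sub_log_nonpos {u : ι → ι → ℝ} {c ce : ι → ℝ}
    (hu : ∀ j k, j ≠ k → 0 ≤ u j k) (hce : ∀ j, 0 < ce j) (hc : ∀ j, 0 < c j)
    (hstat : ∀ j, netInflow u ce j = 0) :
    ∑ j, netInflow u c j * (log (c j) - log (ce j)) ≤ 0 := by
  set x : ι → ℝ := fun j => c j / ce j
  have hx : ∀ j, 0 < x j := fun j => div_pos (hc j) (hce j)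
  have hlog : ∀ j, log (c j) - log (ce j) = log (x j) := fun j =>
    (log_div (hc j).ne' (hce j).ne').symm
  have hterm : ∀ j k, u k j * c k * (log (x j) - log (x k)) ≤ u k j * ce k * (x j - x k) := by
    intro j k
    rcases eq_or_ne j k with rfl | hjk
    · simp
    have hck : c k = ce k * x k := (mul_div_cancel₀ _ (hce k).ne').symm
    rw [hck, mul_assoc (u k j), mul_assoc (u k j), mul_assoc (ce k)]
    exact mul_le_mul_of_nonneg_left
      (mul_le_mul_of_nonneg_left (mul_log_sub_log_le_sub (hx k) (hx j)) (hce k).le)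
      (hu k j hjk.symm)
  calc ∑ j, netInflow u c j * (log (c j) - log (ce j))
      = ∑ j, ∑ k, u k j * c k * (log (x j) - log (x k)) := by
        simp only [hlog, sum_netInflow_mul]
    _ ≤ ∑ j, ∑ k, u k j * ce k * (x j - x k) :=
        sum_le_sum fun j _ => sum_le_sum fun k _ => hterm j k
    _ = 0 := by simp [← sum_netInflow_mul, hstat]

lemma hasDerivAt_relEntropy {x : ℝ → ι → ℝ} {x' y : ι → ℝ} {t : ℝ} (hx : ∀ j, 0 < x t j)
    (hderiv : ∀ j, HasDerivAt (fun s => x s j) (x' j) t) :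
    HasDerivAt (fun s => relEntropy (x s) y)
      (∑ j, x' j * (log (x t j) - log (y j)) + ∑ j, x' j) t := by
  have h := HasDerivAt.fun_sum fun j (_ : j ∈ univ) =>
    (hderiv j).mul (((hderiv j).log (hx j).ne').sub_const (log (y j)))
  refine h.congr_deriv ?_
  rw [← sum_add_distrib]
  refine sum_congr rfl fun j _ => ?_
  field_simp [(hx j).ne']

theorem antitone_relEntropy {u : ι → ι → ℝ} {c : ℝ → ι → ℝ} {ce : ι → ℝ}
    (hu : ∀ j k, j ≠ k → 0 ≤ u j k) (hce : ∀ j, 0 < ce j) (hc : ∀ t j, 0 < c t j)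
    (hstat : ∀ j, netInflow u ce j = 0)
    (hode : ∀ t j, HasDerivAt (fun s => c s j) (netInflow u (c t) j) t) :
    Antitone fun t => relEntropy (c t) ce := by
  refine antitone_of_hasDerivAt_nonpos (fun t => hasDerivAt_relEntropy (hc t) (hode t)) fun t => ?_
  rw [sum_netInflow, add_zero]
  exact sum_netInflow_mul_log_sub_log_nonpos hu hce (hc t) hstat

lemma relEntropy_eq_sum_mul_klFun {x y : ι → ℝ} (hx : ∀ j, 0 < x j) (hy : ∀ j, 0 < y j)
    (hmass : ∑ j, x j = ∑ j, y j) :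
    relEntropy x y = ∑ j, y j * klFun (x j / y j) := by
  have hterm : ∀ j, y j * klFun (x j / y j) = x j * (log (x j) - log (y j)) + (y j - x j) := by
    intro j
    rw [klFun_apply, log_div (hx j).ne' (hy j).ne']
    field_simp [(hy j).ne']
    ring
  rw [sum_congr rfl fun j _ => hterm j, sum_add_distrib, sum_sub_distrib, hmass, sub_self,
    add_zero, relEntropy]

lemma relEntropy_nonneg {x y : ι → ℝ} (hx : ∀ j, 0 < x j) (hy : ∀ j, 0 < y j)
    (hmass : ∑ j, x j = ∑ j, y j) : 0 ≤ relEntropy x y := by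
  rw [relEntropy_eq_sum_mul_klFun hx hy hmass]
  exact sum_nonneg fun j _ => mul_nonneg (hy j).le (klFun_nonneg (div_pos (hx j) (hy j)).le)

lemma relEntropy_eq_zero_iff {x y : ι → ℝ} (hx : ∀ j, 0 < x j) (hy : ∀ j, 0 < y j)
    (hmass : ∑ j, x j = ∑ j, y j) : relEntropy x y = 0 ↔ x = y := by
  rw [relEntropy_eq_sum_mul_klFun hx hy hmass, sum_eq_zero_iff_of_nonneg fun j _ =>
    mul_nonneg (hy j).le (klFun_nonneg (div_pos (hx j) (hy j)).le), funext_iff]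
  refine forall_congr' fun j => ?_
  rw [mul_eq_zero_iff_left (hy j).ne', klFun_eq_zero_iff (div_pos (hx j) (hy j)).le,
    div_eq_one_iff_eq (hy j).ne']
  simp

lemma sum_mul_chemicalPotential_eq {x y μ0 K : ι → ℝ} {β μ : ℝ}
    (hcompat : ∀ j, μ0 j + K j + β⁻¹ * log (y j) = μ) :
    ∑ j, x j * (μ0 j + β⁻¹ * log (x j) + K j) = μ * ∑ j, x j + β⁻¹ * relEntropy x y := by
  have hterm : ∀ j, x j * (μ0 j + β⁻¹ * log (x j) + K j)
      = μ * x j + β⁻¹ * (x j * (log (x j) - log (y j))) := by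
    intro j
    rw [← hcompat j]
    ring
  rw [sum_congr rfl fun j _ => hterm j, sum_add_distrib, ← mul_sum, ← mul_sum, relEntropy]

end MasterEquation

open MasterEquation in
theorem stmt5_general (J : ℕ) (β μ c : ℝ) (hβ : 0 < β)
    (u : Fin J → Fin J → ℝ) (μ0 K : Fin J → ℝ)
    (ce : Fin J → ℝ) (cj : ℝ → Fin J → ℝ)
    (hu : ∀ j k, j ≠ k → 0 ≤ u j k)
    (hce : ∀ j, 0 < ce j) (hcesum : ∑ j, ce j = c)
    (hstat : ∀ j, ∑ k, (u k j * ce k - u j k * ce j) = 0)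
    (hcj : ∀ t j, 0 < cj t j) (hsum : ∀ t, ∑ j, cj t j = c)
    (hode : ∀ t j, HasDerivAt (fun s => cj s j)
      (∑ k, (u k j * cj t k - u j k * cj t j)) t)
    (hcompat : ∀ j, μ0 j + K j + β⁻¹ * Real.log (ce j) = μ) :
    (∀ s t : ℝ, s ≤ t →
      ∑ j, cj t j * (μ0 j + β⁻¹ * Real.log (cj t j) + K j) ≤
        ∑ j, cj s j * (μ0 j + β⁻¹ * Real.log (cj s j) + K j)) ∧
    ∀ t, μ * c ≤ ∑ j, cj t j * (μ0 j + β⁻¹ * Real.log (cj t j) + K j) ∧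
      ((∑ j, cj t j * (μ0 j + β⁻¹ * Real.log (cj t j) + K j)) = μ * c ↔
        ∀ j, cj t j = ce j) := by
  have hmass : ∀ t, ∑ j, cj t j = ∑ j, ce j := fun t => (hsum t).trans hcesum.symm
  have hgibbs : ∀ t, ∑ j, cj t j * (μ0 j + β⁻¹ * Real.log (cj t j) + K j)
      = μ * c + β⁻¹ * relEntropy (cj t) ce := fun t => by
    rw [sum_mul_chemicalPotential_eq hcompat, hsum t]
  have hβinv : 0 < β⁻¹ := inv_pos.mpr hβ
  simp only [hgibbs]
  refine ⟨fun s t hst => ?_, fun t => ⟨?_, ?_⟩⟩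
  · have := antitone_relEntropy hu hce hcj hstat hode hst
    gcongr
  · exact le_add_of_nonneg_right (mul_nonneg hβinv.le (relEntropy_nonneg (hcj t) hce (hmass t)))
  · rw [add_eq_left, mul_eq_zero_iff_left hβinv.ne', relEntropy_eq_zero_iff (hcj t) hce (hmass t),
      funext_iff]

/-- Under the compatibility condition, along the Kolmogorov forward equations
of an irreducible Markov chain with stationary concentrations `c_{j,e}`, the
Gibbs free energy density `g(t) = Σ_j c_j μ_j` is non-increasing, bounded below
by `μ c`, with equality iff `c_j = c_{j,e}` for all `j`. -/
theorem stmt5 (J : ℕ) (hJ : 0 < J) (β μ c : ℝ) (hβ : 0 < β)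
    (u : Fin J → Fin J → ℝ) (μ0 K : Fin J → ℝ)
    (ce : Fin J → ℝ) (cj : ℝ → Fin J → ℝ)
    (hu : ∀ j k, j ≠ k → 0 ≤ u j k)
    (hirr : ∀ j k, j ≠ k → Relation.TransGen (fun a b => a ≠ b ∧ 0 < u a b) j k)
    (hce : ∀ j, 0 < ce j) (hcesum : ∑ j, ce j = c)
    (hstat : ∀ j, ∑ k, (u k j * ce k - u j k * ce j) = 0)
    (hcj : ∀ t j, 0 < cj t j) (hsum : ∀ t, ∑ j, cj t j = c)
    (hode : ∀ t j, HasDerivAt (fun s => cj s j)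
      (∑ k, (u k j * cj t k - u j k * cj t j)) t)
    (hcompat : ∀ j, μ0 j + K j + β⁻¹ * Real.log (ce j) = μ) :
    (∀ s t : ℝ, s ≤ t →
      ∑ j, cj t j * (μ0 j + β⁻¹ * Real.log (cj t j) + K j) ≤
        ∑ j, cj s j * (μ0 j + β⁻¹ * Real.log (cj s j) + K j)) ∧
    ∀ t, μ * c ≤ ∑ j, cj t j * (μ0 j + β⁻¹ * Real.log (cj t j) + K j) ∧
      ((∑ j, cj t j * (μ0 j + β⁻¹ * Real.log (cj t j) + K j)) = μ * c ↔
        ∀ j, cj t j = ce j) :=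
  stmt5_general J β μ c hβ u μ0 K ce cj hu hce hcesum hstat hcj hsum hode hcompat
end

section
/- Let p(t) solve the forward equations of an irreducible finite Markov chain with stationary distribution π (all entries positive). Then dS_M/dt = Σ_{j,k} q_{jk}·p_j·(ln(p_k/π_k) − ln(p_j/π_j)) ≤ 0, with equality at time t if and only if p_j(t)/π_j is constant over each communicating class, i.e., (by irreducibility) if and only if p(t) = π. -/
private lemma aux_log_le (x y : ℝ) (hx : 0 < x) (hy : 0 < y) :
    x * (Real.log y - Real.log x) ≤ y - x := by
  have h := Real.log_le_sub_one_of_pos (div_pos hy hx)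
  rw [Real.log_div hy.ne' hx.ne'] at h
  have h2 : x * (Real.log y - Real.log x) ≤ x * (y / x - 1) :=
    mul_le_mul_of_nonneg_left h hx.le
  have h3 : x * (y / x - 1) = y - x := by field_simp
  linarith

private lemma aux_log_lt (x y : ℝ) (hx : 0 < x) (hy : 0 < y) (hxy : x ≠ y) :
    x * (Real.log y - Real.log x) < y - x := by
  have hne : y / x ≠ 1 := by
    intro h
    apply hxy
    field_simp at h
    linarith
  have h := Real.log_lt_sub_one_of_pos (div_pos hy hx) hne
  rw [Real.log_div hy.ne' hx.ne'] at h
  have h2 : x * (Real.log y - Real.log x) < x * (y / x - 1) :=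
    mul_lt_mul_of_pos_left h hx
  have h3 : x * (y / x - 1) = y - x := by field_simp
  linarith

/-- Entropy dissipation identity and strict equality characterization: along
the forward equations of an irreducible finite Markov chain with positive
stationary distribution `π`, the relative entropy `S_M` has derivative
`Σ_{j,k} q_{jk} p_j (ln(p_k/π_k) − ln(p_j/π_j)) ≤ 0`, with equality at time `t`
iff `p(t) = π`. -/
theorem stmt17 (J : ℕ) (hJ : 0 < J) (q : Fin J → Fin J → ℝ)
    (π : Fin J → ℝ) (p : ℝ → Fin J → ℝ)
    (hq : ∀ j k, j ≠ k → 0 ≤ q j k)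
    (hirr : ∀ j k, j ≠ k → Relation.TransGen (fun a b => a ≠ b ∧ 0 < q a b) j k)
    (hπpos : ∀ j, 0 < π j) (hπsum : ∑ j, π j = 1)
    (hstat : ∀ j, ∑ k, (q k j * π k - q j k * π j) = 0)
    (hp : ∀ t j, HasDerivAt (fun s => p s j)
      (∑ k, (q k j * p t k - q j k * p t j)) t)
    (hppos : ∀ t j, 0 < p t j) (hpsum : ∀ t, ∑ j, p t j = 1) :
    ∀ t : ℝ,
      HasDerivAt (fun s => ∑ j, p s j * Real.log (p s j / π j))
        (∑ j, ∑ k, q j k * p t j *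
          (Real.log (p t k / π k) - Real.log (p t j / π j))) t ∧
      (∑ j, ∑ k, q j k * p t j *
          (Real.log (p t k / π k) - Real.log (p t j / π j))) ≤ 0 ∧
      ((∑ j, ∑ k, q j k * p t j *
          (Real.log (p t k / π k) - Real.log (p t j / π j))) = 0 ↔
        ∀ j, p t j = π j) := by
  intro t
  have hπne : ∀ j, π j ≠ 0 := fun j => (hπpos j).ne'
  have hpne : ∀ j, p t j ≠ 0 := fun j => (hppos t j).ne'
  have hfpos : ∀ j, 0 < p t j / π j := fun j => div_pos (hppos t j) (hπpos j)
  -- key index-swap identity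
  have key : ∀ g : Fin J → ℝ,
      (∑ j, (∑ k, (q k j * p t k - q j k * p t j)) * g j)
        = ∑ j, ∑ k, q j k * p t j * (g k - g j) := by
    intro g
    have h1 : (∑ j, (∑ k, (q k j * p t k - q j k * p t j)) * g j)
        = (∑ j, ∑ k, q k j * p t k * g j) - ∑ j, ∑ k, q j k * p t j * g j := by
      rw [← Finset.sum_sub_distrib]
      refine Finset.sum_congr rfl fun j _ => ?_
      rw [Finset.sum_mul, ← Finset.sum_sub_distrib]
      refine Finset.sum_congr rfl fun k _ => ?_
      ring
    have h2 : (∑ j, ∑ k, q k j * p t k * g j) = ∑ j, ∑ k, q j k * p t j * g k :=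
      Finset.sum_comm
    rw [h1, h2, ← Finset.sum_sub_distrib]
    refine Finset.sum_congr rfl fun j _ => ?_
    rw [← Finset.sum_sub_distrib]
    refine Finset.sum_congr rfl fun k _ => ?_
    ring
  -- part 1 : derivative
  have hderiv : HasDerivAt (fun s => ∑ j, p s j * Real.log (p s j / π j))
      (∑ j, ((∑ k, (q k j * p t k - q j k * p t j)) * Real.log (p t j / π j)
        + (∑ k, (q k j * p t k - q j k * p t j)))) t := by
    apply HasDerivAt.fun_sum
    intro j _
    have h1 := hp t j
    have h2 : HasDerivAt (fun s => Real.log (p s j / π j))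
        ((∑ k, (q k j * p t k - q j k * p t j)) / π j / (p t j / π j)) t :=
      (h1.div_const (π j)).log (hfpos j).ne'
    have h3 := h1.mul h2
    have harith : (∑ k, (q k j * p t k - q j k * p t j)) * Real.log (p t j / π j)
        + p t j * ((∑ k, (q k j * p t k - q j k * p t j)) / π j / (p t j / π j))
        = (∑ k, (q k j * p t k - q j k * p t j)) * Real.log (p t j / π j)
          + (∑ k, (q k j * p t k - q j k * p t j)) := by
      field_simp [hπne j, hpne j]
      simp only [mul_comm (p t j) (q j _)]
      ring
    exact harith ▸ h3
  have hDsum : (∑ j, ((∑ k, (q k j * p t k - q j k * p t j)) * Real.log (p t j / π j)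
        + (∑ k, (q k j * p t k - q j k * p t j))))
      = ∑ j, ∑ k, q j k * p t j *
          (Real.log (p t k / π k) - Real.log (p t j / π j)) := by
    rw [Finset.sum_add_distrib]
    have k1 := key (fun j => Real.log (p t j / π j))
    have k2 := key (fun _ => 1)
    simp only [mul_one, sub_self, mul_zero, Finset.sum_const_zero] at k2
    rw [k1, k2, add_zero]
  have part1 : HasDerivAt (fun s => ∑ j, p s j * Real.log (p s j / π j))
      (∑ j, ∑ k, q j k * p t j *
        (Real.log (p t k / π k) - Real.log (p t j / π j))) t := hDsum ▸ hderiv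
  -- termwise bound
  have hrewrite : ∀ j k, q j k * p t j *
      (Real.log (p t k / π k) - Real.log (p t j / π j))
      = (q j k * π j) * ((p t j / π j) *
          (Real.log (p t k / π k) - Real.log (p t j / π j))) := by
    intro j k
    have : π j * (p t j / π j) = p t j := by rw [mul_comm, div_mul_cancel₀ _ (hπne j)]
    calc q j k * p t j * (Real.log (p t k / π k) - Real.log (p t j / π j))
        = q j k * (π j * (p t j / π j)) *
            (Real.log (p t k / π k) - Real.log (p t j / π j)) := by rw [this]
      _ = (q j k * π j) * ((p t j / π j) *
            (Real.log (p t k / π k) - Real.log (p t j / π j))) := by ring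
  have hAB : ∀ j k, q j k * p t j *
      (Real.log (p t k / π k) - Real.log (p t j / π j))
      ≤ q j k * π j * (p t k / π k - p t j / π j) := by
    intro j k
    rcases eq_or_ne j k with rfl | hjk
    · simp
    · rw [hrewrite j k]
      exact mul_le_mul_of_nonneg_left
        (aux_log_le _ _ (hfpos j) (hfpos k))
        (mul_nonneg (hq j k hjk) (hπpos j).le)
  have hABlt : ∀ j k, 0 < q j k → p t j / π j ≠ p t k / π k →
      q j k * p t j * (Real.log (p t k / π k) - Real.log (p t j / π j))
      < q j k * π j * (p t k / π k - p t j / π j) := by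
    intro j k hq' hne
    rw [hrewrite j k]
    exact mul_lt_mul_of_pos_left
      (aux_log_lt _ _ (hfpos j) (hfpos k) hne)
      (mul_pos hq' (hπpos j))
  -- the comparison sum vanishes
  have hB0 : (∑ j, ∑ k, q j k * π j * (p t k / π k - p t j / π j)) = 0 := by
    have h1 : (∑ j, ∑ k, q j k * π j * (p t k / π k))
        = ∑ j, ∑ k, q k j * π k * (p t j / π j) := Finset.sum_comm
    calc (∑ j, ∑ k, q j k * π j * (p t k / π k - p t j / π j))
        = (∑ j, ∑ k, q j k * π j * (p t k / π k))
          - ∑ j, ∑ k, q j k * π j * (p t j / π j) := by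
          rw [← Finset.sum_sub_distrib]
          refine Finset.sum_congr rfl fun j _ => ?_
          rw [← Finset.sum_sub_distrib]
          refine Finset.sum_congr rfl fun k _ => ?_
          ring
      _ = ∑ j, (∑ k, (q k j * π k - q j k * π j)) * (p t j / π j) := by
          rw [h1, ← Finset.sum_sub_distrib]
          refine Finset.sum_congr rfl fun j _ => ?_
          rw [Finset.sum_mul, ← Finset.sum_sub_distrib]
          refine Finset.sum_congr rfl fun k _ => ?_
          ring
      _ = 0 := by simp [hstat]
  have part2 : (∑ j, ∑ k, q j k * p t j *
      (Real.log (p t k / π k) - Real.log (p t j / π j))) ≤ 0 := by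
    calc (∑ j, ∑ k, q j k * p t j *
        (Real.log (p t k / π k) - Real.log (p t j / π j)))
        ≤ ∑ j, ∑ k, q j k * π j * (p t k / π k - p t j / π j) :=
          Finset.sum_le_sum fun j _ => Finset.sum_le_sum fun k _ => hAB j k
      _ = 0 := hB0
  refine ⟨part1, part2, ?_, ?_⟩
  · -- equality implies p = π
    intro hD0
    have hsumT : (∑ j, ∑ k, (q j k * π j * (p t k / π k - p t j / π j)
        - q j k * p t j * (Real.log (p t k / π k) - Real.log (p t j / π j)))) = 0 := by
      have : (∑ j, ∑ k, (q j k * π j * (p t k / π k - p t j / π j)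
          - q j k * p t j * (Real.log (p t k / π k) - Real.log (p t j / π j))))
          = (∑ j, ∑ k, q j k * π j * (p t k / π k - p t j / π j))
            - ∑ j, ∑ k, q j k * p t j *
                (Real.log (p t k / π k) - Real.log (p t j / π j)) := by
        rw [← Finset.sum_sub_distrib]
        refine Finset.sum_congr rfl fun j _ => ?_
        rw [← Finset.sum_sub_distrib]
      rw [this, hB0, hD0, sub_zero]
    have hT : ∀ j k, q j k * π j * (p t k / π k - p t j / π j)
        - q j k * p t j * (Real.log (p t k / π k) - Real.log (p t j / π j)) = 0 := by
      intro j k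
      have houter := (Finset.sum_eq_zero_iff_of_nonneg
        (fun j _ => Finset.sum_nonneg fun k _ => sub_nonneg.2 (hAB j k))).1 hsumT
        j (Finset.mem_univ j)
      exact (Finset.sum_eq_zero_iff_of_nonneg
        (fun k _ => sub_nonneg.2 (hAB j k))).1 houter k (Finset.mem_univ k)
    have hedge : ∀ a b : Fin J, a ≠ b ∧ 0 < q a b → p t a / π a = p t b / π b := by
      rintro a b ⟨-, hqab⟩
      by_contra hne
      have := hABlt a b hqab hne
      have := hT a b
      linarith
    have hconst : ∀ j k : Fin J,
        Relation.TransGen (fun a b => a ≠ b ∧ 0 < q a b) j k →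
          p t j / π j = p t k / π k := by
      intro j k h
      induction h with
      | single h' => exact hedge _ _ h'
      | tail _ h' ih => exact ih.trans (hedge _ _ h')
    have hall : ∀ j k : Fin J, p t j / π j = p t k / π k := by
      intro j k
      rcases eq_or_ne j k with rfl | hjk
      · rfl
      · exact hconst j k (hirr j k hjk)
    set j0 : Fin J := ⟨0, hJ⟩ with hj0
    have hone : p t j0 / π j0 = 1 := by
      have hcalc : (1:ℝ) = (p t j0 / π j0) * 1 := by
        calc (1:ℝ) = ∑ j, p t j := (hpsum t).symm
          _ = ∑ j, π j * (p t j0 / π j0) := by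
              refine Finset.sum_congr rfl fun j _ => ?_
              rw [← hall j j0, mul_comm, div_mul_cancel₀ _ (hπne j)]
          _ = (p t j0 / π j0) * ∑ j, π j := by
              rw [Finset.mul_sum]
              exact Finset.sum_congr rfl fun j _ => mul_comm _ _
          _ = (p t j0 / π j0) * 1 := by rw [hπsum]
      linarith [hcalc]
    intro j
    have : p t j / π j = 1 := (hall j j0).trans hone
    have := (div_eq_one_iff_eq (hπne j)).1 this
    exact this
  · -- p = π implies the sum is zero
    intro hpπ
    refine Finset.sum_eq_zero fun j _ => Finset.sum_eq_zero fun k _ => ?_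
    rw [hpπ j, hpπ k, div_self (hπne j), div_self (hπne k)]
    simp
end
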